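/- arXiv:1009.4584 — 3 statements merged into one kernel-verified Lean document; each statement's English description precedes it below -/
import Mathlib

section
/- Let U ⊆ ℂ be a connected open set with 0 ∈ U, and let f₁, f₂, f₃ be functions holomorphic on U. Suppose that on the universal cover of U \ {0} (i.e., as multivalued functions via a branch of log), the identity f₁(z) + f₂(z)·log z + f₃(z)·(log z)² = c·√z holds for some constant c ∈ ℂ and some branch of √z. Then c = 0 and f₂ = f₃ = 0 and f₁ = 0. -/
open Complex Topology Filter

lemma aux_zero {g : ℂ → ℂ} {U : Set ℂ} (hU : IsOpen U) (h0 : (0:ℂ) ∈ U)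
    (hg : ContinuousWithinAt g U 0) (hz : ∀ z ∈ U, z ≠ 0 → g z = 0) : g 0 = 0 := by
  have h1 : 𝓝[U \ {0}] (0:ℂ) = 𝓝[≠] (0:ℂ) := by
    rw [nhdsWithin_restrict' ({0}ᶜ : Set ℂ) (hU.mem_nhds h0)]
    congr 1
    ext x; simp [and_comm]
  have hne : (𝓝[U \ {0}] (0:ℂ)).NeBot := by rw [h1]; infer_instance
  have t1 : Filter.Tendsto g (𝓝[U \ {0}] (0:ℂ)) (𝓝 (g 0)) :=
    (hg.mono Set.diff_subset)
  have t2 : Filter.Tendsto g (𝓝[U \ {0}] (0:ℂ)) (𝓝 0) := by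
    apply Filter.Tendsto.congr' _ tendsto_const_nhds
    filter_upwards [self_mem_nhdsWithin] with x hx
    exact (hz x hx.1 hx.2).symm
  exact tendsto_nhds_unique t1 t2

/-- If `f₁ + f₂·log z + f₃·(log z)²  = c·√z` holds on the universal cover of
`U \ {0}` (parametrized by `w ↦ exp w`, with `log z = w` and `√z = exp (w/2)`),
where `f₁, f₂, f₃` are holomorphic on the connected open set `U ∋ 0`,
then `c = 0` and `f₁ = f₂ = f₃ = 0` on `U`. -/
theorem stmt0 (U : Set ℂ) (hU : IsOpen U) (hUconn : IsConnected U) (hU0 : (0 : ℂ) ∈ U)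
    (f₁ f₂ f₃ : ℂ → ℂ)
    (hf₁ : DifferentiableOn ℂ f₁ U) (hf₂ : DifferentiableOn ℂ f₂ U)
    (hf₃ : DifferentiableOn ℂ f₃ U) (c : ℂ)
    (hid : ∀ w : ℂ, Complex.exp w ∈ U →
      f₁ (Complex.exp w) + f₂ (Complex.exp w) * w + f₃ (Complex.exp w) * w ^ 2
        = c * Complex.exp (w / 2)) :
    c = 0 ∧ (∀ z ∈ U, f₂ z = 0) ∧ (∀ z ∈ U, f₃ z = 0) ∧ (∀ z ∈ U, f₁ z = 0) := by
  have hP : (Real.pi : ℂ) * Complex.I ≠ 0 := by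
    simp [Real.pi_ne_zero, Complex.I_ne_zero]
  set P := (Real.pi : ℂ) * Complex.I with hPdef
  have key : ∀ z ∈ U, z ≠ 0 → c = 0 ∧ f₁ z = 0 ∧ f₂ z = 0 ∧ f₃ z = 0 := by
    intro z hzU hz0
    set w := Complex.log z with hw
    have hew : Complex.exp w = z := Complex.exp_log hz0
    have h2pi : Complex.exp (2 * P) = 1 := by
      rw [hPdef, show (2:ℂ) * ((Real.pi:ℂ) * Complex.I) = 2 * Real.pi * Complex.I by ring]
      exact Complex.exp_two_pi_mul_I
    have hpi : Complex.exp P = -1 := by rw [hPdef]; exact Complex.exp_pi_mul_I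
    set E := Complex.exp (w / 2) with hE
    have hEne : E ≠ 0 := Complex.exp_ne_zero _
    -- exponentials at shifted points
    have hex : ∀ k : ℂ, Complex.exp (w + 2 * P * k) = z * Complex.exp (2 * P * k) := by
      intro k; rw [Complex.exp_add, hew]
    have hex1 : Complex.exp (w + 2 * P * 1) = z := by
      rw [hex, mul_one, h2pi, mul_one]
    have hex2 : Complex.exp (w + 2 * P * 2) = z := by
      rw [hex, show (2:ℂ) * P * 2 = 2 * P + 2 * P by ring, Complex.exp_add, h2pi]; ring
    have hex3 : Complex.exp (w + 2 * P * 3) = z := by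
      rw [hex, show (2:ℂ) * P * 3 = 2 * P + (2 * P + 2 * P) by ring, Complex.exp_add,
        Complex.exp_add, h2pi]; ring
    have hhalf1 : Complex.exp ((w + 2 * P * 1) / 2) = -E := by
      rw [show (w + 2 * P * 1) / 2 = w / 2 + P by ring, Complex.exp_add, hpi, hE]; ring
    have hhalf2 : Complex.exp ((w + 2 * P * 2) / 2) = E := by
      rw [show (w + 2 * P * 2) / 2 = w / 2 + 2 * P by ring, Complex.exp_add, h2pi, hE]; ring
    have hhalf3 : Complex.exp ((w + 2 * P * 3) / 2) = -E := by
      rw [show (w + 2 * P * 3) / 2 = w / 2 + (P + 2 * P) by ring, Complex.exp_add,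
        Complex.exp_add, hpi, h2pi, hE]; ring
    have e0 := hid w (by rwa [hew])
    rw [hew] at e0
    have e1 := hid (w + 2 * P * 1) (by rwa [hex1])
    rw [hex1, hhalf1] at e1
    have e2 := hid (w + 2 * P * 2) (by rwa [hex2])
    rw [hex2, hhalf2] at e2
    have e3 := hid (w + 2 * P * 3) (by rwa [hex3])
    rw [hex3, hhalf3] at e3
    have hd16 : 16 * P ^ 2 * f₃ z = 0 := by linear_combination e3 - e1 - e2 + e0
    have hd : f₃ z = 0 := by
      rcases mul_eq_zero.1 hd16 with h | h
      · exact absurd h (mul_ne_zero (by norm_num) (pow_ne_zero 2 hP))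
      · exact h
    have hb4 : 4 * P * f₂ z = 0 := by
      linear_combination e2 - e0 - (8 * P * w + 16 * P ^ 2) * hd
    have hb : f₂ z = 0 := by
      rcases mul_eq_zero.1 hb4 with h | h
      · exact absurd h (mul_ne_zero (by norm_num) hP)
      · exact h
    have ha2 : (2:ℂ) * f₁ z = 0 := by
      linear_combination e0 + e1 - (2 * w + 2 * P) * hb - (w ^ 2 + (w + 2 * P * 1) ^ 2) * hd
    have ha : f₁ z = 0 := by
      have := mul_eq_zero.1 ha2
      simpa using this
    have hcE : c * E = 0 := by
      linear_combination -e0 + ha + w * hb + w ^ 2 * hd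
    have hc : c = 0 := by
      rcases mul_eq_zero.1 hcE with h | h
      · exact h
      · exact absurd h hEne
    exact ⟨hc, ha, hb, hd⟩
  -- find a nonzero point of U
  obtain ⟨ε, hε, hball⟩ := Metric.isOpen_iff.1 hU 0 hU0
  have hzmem : (ε / 2 : ℂ) ∈ U := by
    apply hball
    simp only [Metric.mem_ball, dist_zero_right]
    have : ‖((ε:ℂ)/2)‖ = ε/2 := by
      rw [norm_div]; simp [Real.norm_of_nonneg hε.le]
    rw [this]; linarith
  have hzne : (ε / 2 : ℂ) ≠ 0 := by
    simp only [ne_eq, div_eq_zero_iff]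
    push_neg
    constructor
    · exact_mod_cast hε.ne'
    · norm_num
  have hc : c = 0 := (key _ hzmem hzne).1
  refine ⟨hc, ?_, ?_, ?_⟩
  · intro z hz
    rcases eq_or_ne z 0 with rfl | hne
    · exact aux_zero hU hU0 (hf₂.continuousOn.continuousWithinAt hU0)
        (fun y hy hy0 => (key y hy hy0).2.2.1)
    · exact (key z hz hne).2.2.1
  · intro z hz
    rcases eq_or_ne z 0 with rfl | hne
    · exact aux_zero hU hU0 (hf₃.continuousOn.continuousWithinAt hU0)
        (fun y hy hy0 => (key y hy hy0).2.2.2)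
    · exact (key z hz hne).2.2.2
  · intro z hz
    rcases eq_or_ne z 0 with rfl | hne
    · exact aux_zero hU hU0 (hf₁.continuousOn.continuousWithinAt hU0)
        (fun y hy hy0 => (key y hy hy0).2.1)
    · exact (key z hz hne).2.1
end

section
/- Fix λ ∈ ℂ \ {0}. Let a, b, c, d be holomorphic functions on a connected open set Ω ⊆ ℂ \ {0} satisfying λ·a' = b/z - c = -λ·d' and λ·b' = a - d = -λ·z·c'. Then b satisfies the third-order linear ODE (λ²/2)·b'''(z) + b(z)/z² - (2/z)·b'(z) = 0 on Ω. -/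
/-!
Differentiating `λ b' = a - d` and inserting the equations for `a'` and `d'` gives
`(λ²/2) b'' = b/z - c`. Differentiating once more, `c'` is eliminated through
`z c' = -b'`, which combines the last two equations.
-/

open Set

theorem const_mul_deriv_eq_of_eqOn {𝕜 : Type*} [NontriviallyNormedField 𝕜] {f g : 𝕜 → 𝕜}
    {s : Set 𝕜} {l z : 𝕜} (hs : IsOpen s) (h : EqOn (fun w => l * f w) g s) (hz : z ∈ s) :
    l * deriv f z = deriv g z := by
  rw [← deriv_const_mul_field]
  exact (h.eventuallyEq_of_mem (hs.mem_nhds hz)).deriv_eq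

theorem stmt4_general (l : ℂ) (hl : l ≠ 0) (Ω : Set ℂ) (hΩ : IsOpen Ω)
    (h0 : (0 : ℂ) ∉ Ω) (a b c d : ℂ → ℂ)
    (ha : DifferentiableOn ℂ a Ω) (hb : DifferentiableOn ℂ b Ω)
    (hc : DifferentiableOn ℂ c Ω) (hd : DifferentiableOn ℂ d Ω)
    (e1 : ∀ z ∈ Ω, l * deriv a z = b z / z - c z)
    (e2 : ∀ z ∈ Ω, l * deriv d z = -(b z / z - c z))
    (e3 : ∀ z ∈ Ω, l * deriv b z = a z - d z)
    (e4 : ∀ z ∈ Ω, l * z * deriv c z = -(a z - d z)) :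
    ∀ z ∈ Ω, l ^ 2 / 2 * deriv (deriv (deriv b)) z + b z / z ^ 2
        - (2 / z) * deriv b z = 0 := by
  have hb'' : EqOn (fun w => l ^ 2 / 2 * deriv (deriv b) w) (fun w => b w / w - c w) Ω := by
    intro w hw
    have hab := const_mul_deriv_eq_of_eqOn (g := a - d) hΩ e3 hw
    rw [deriv_sub (ha.differentiableAt (hΩ.mem_nhds hw))
      (hd.differentiableAt (hΩ.mem_nhds hw))] at hab
    linear_combination l / 2 * hab + e1 w hw / 2 - e2 w hw / 2
  intro z hz
  have hz0 : z ≠ 0 := ne_of_mem_of_not_mem hz h0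
  have hbz := hb.differentiableAt (hΩ.mem_nhds hz)
  have hb''' := const_mul_deriv_eq_of_eqOn hΩ hb'' hz
  have hbz_div : DifferentiableAt ℂ (fun w => b w / w) z := hbz.div differentiableAt_id hz0
  rw [deriv_fun_sub hbz_div (hc.differentiableAt (hΩ.mem_nhds hz)),
    deriv_fun_div hbz differentiableAt_fun_id hz0, deriv_id'', mul_one] at hb'''
  have hc' : deriv c z = -deriv b z / z := by
    rw [eq_div_iff hz0]
    exact mul_left_cancel₀ hl (by linear_combination e4 z hz + e3 z hz)
  rw [hb''', hc']
  field_simp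
  ring

/-- For the system `λa' = b/z - c = -λd'` and `λb' = a - d = -λz·c'` on a
connected open `Ω ⊆ ℂ \ {0}` (with `λ ≠ 0`), the function `b` satisfies the third-order
ODE `(λ²/2)·b''' + b/z² - (2/z)·b' = 0` on `Ω`. -/
theorem stmt4 (l : ℂ) (hl : l ≠ 0) (Ω : Set ℂ) (hΩ : IsOpen Ω) (hΩconn : IsConnected Ω)
    (h0 : (0 : ℂ) ∉ Ω) (a b c d : ℂ → ℂ)
    (ha : DifferentiableOn ℂ a Ω) (hb : DifferentiableOn ℂ b Ω)
    (hc : DifferentiableOn ℂ c Ω) (hd : DifferentiableOn ℂ d Ω)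
    (e1 : ∀ z ∈ Ω, l * deriv a z = b z / z - c z)
    (e2 : ∀ z ∈ Ω, l * deriv d z = -(b z / z - c z))
    (e3 : ∀ z ∈ Ω, l * deriv b z = a z - d z)
    (e4 : ∀ z ∈ Ω, l * z * deriv c z = -(a z - d z)) :
    ∀ z ∈ Ω, l ^ 2 / 2 * deriv (deriv (deriv b)) z + b z / z ^ 2
        - (2 / z) * deriv b z = 0 :=
  stmt4_general l hl Ω hΩ h0 a b c d ha hb hc hd e1 e2 e3 e4
end

section
/- Let A = (0, 1; 1, 0), let c ∈ ℂ \ {0}, let Ω = 1 + λ²/(4c), and fix roots √c, Ω^{1/4} (with √Ω = (Ω^{1/4})²). Define P = (Ω^{3/4}, (λ/(2√c))·Ω^{-1/4}; (λ/(2√c))·Ω^{1/4}, Ω^{1/4})^{-1}. Then conjugation by P transforms the potential √c·(0, λ^{-1}; λ^{-1} + λ/(4c), 0)·dz/z, after a further gauge by exp(λ^{-1}√c(1-√Ω)(log z)·A), into √c·λ^{-1}·A·dz/z. -/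
open Complex

lemma exp_smul_swap (t : ℂ) :
    NormedSpace.exp (t • (!![0, 1; 1, 0] : Matrix (Fin 2) (Fin 2) ℂ)) =
      !![Complex.cosh t, Complex.sinh t; Complex.sinh t, Complex.cosh t] := by
  have hU : IsUnit (!![1, 1; 1, -1] : Matrix (Fin 2) (Fin 2) ℂ) := by
    rw [Matrix.isUnit_iff_isUnit_det, Matrix.det_fin_two_of]
    simp [isUnit_iff_ne_zero]
    norm_num
  have hUinv : (!![1, 1; 1, -1] : Matrix (Fin 2) (Fin 2) ℂ)⁻¹ = !![1/2, 1/2; 1/2, -(1/2)] := by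
    apply Matrix.inv_eq_right_inv
    ext i j
    fin_cases i <;> fin_cases j <;>
      simp [Matrix.mul_apply, Fin.sum_univ_two] <;> ring
  have key : t • (!![0,1;1,0] : Matrix (Fin 2) (Fin 2) ℂ)
      = !![1,1;1,-1] * Matrix.diagonal ![t, -t] * (!![1,1;1,-1] : Matrix (Fin 2) (Fin 2) ℂ)⁻¹ := by
    rw [hUinv]
    ext i j
    fin_cases i <;> fin_cases j <;>
      simp [Matrix.mul_apply, Matrix.vecMul, dotProduct, Fin.sum_univ_two,
        Matrix.diagonal_apply] <;> ring
  have hconj := Matrix.exp_conj (!![1,1;1,-1]) (Matrix.diagonal ![t, -t]) hU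
  rw [key, hconj, Matrix.exp_diagonal, hUinv]
  ext i j
  fin_cases i <;> fin_cases j <;>
    simp [Matrix.mul_apply, Matrix.vecMul, dotProduct, Fin.sum_univ_two,
      Matrix.diagonal_apply, Pi.exp_def, ← Complex.exp_eq_exp_ℂ, Complex.cosh, Complex.sinh] <;> ring

set_option maxHeartbeats 1000000 in
/-- With `Ω = 1 + λ²/(4c)`, fixed roots `sc = √c`, `q = Ω^{1/4}`,
`A = (0,1;1,0)`, and the gauge `p(z) = P·exp(λ⁻¹·√c·(1-√Ω)·(log z)·A)` where
`P = (Ω^{3/4}, (λ/(2√c))Ω^{-1/4}; (λ/(2√c))Ω^{1/4}, Ω^{1/4})⁻¹`, the potential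
`√c·(0, λ⁻¹; λ⁻¹ + λ/(4c), 0)·dz/z` is gauged into the vacuum potential
`√c·λ⁻¹·A·dz/z`. -/
theorem stmt16 (c : ℂ) (hc : c ≠ 0) (l : ℂ) (hl : l ≠ 0)
    (sc : ℂ) (hsc : sc ^ 2 = c)
    (q : ℂ) (hq : q ^ 4 = 1 + l ^ 2 / (4 * c)) (hq0 : q ≠ 0)
    (A : Matrix (Fin 2) (Fin 2) ℂ) (hA : A = !![0, 1; 1, 0])
    (P : Matrix (Fin 2) (Fin 2) ℂ)
    (hP : P = (!![q ^ 3, l / (2 * sc) * q⁻¹; l / (2 * sc) * q, q])⁻¹)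
    (p : ℂ → Matrix (Fin 2) (Fin 2) ℂ)
    (hp : ∀ z, p z = P * NormedSpace.exp ((l⁻¹ * sc * (1 - q ^ 2) * Complex.log z) • A)) :
    ∀ z ∈ Complex.slitPlane,
      (p z)⁻¹ * ((sc / z) • !![0, l⁻¹; l⁻¹ + l / (4 * c), 0]) * p z
          + (p z)⁻¹ * (Matrix.of fun i j => deriv (fun w => p w i j) z)
        = (sc * l⁻¹ / z) • A := by
  intro z hz
  have hz0 : z ≠ 0 := Complex.slitPlane_ne_zero hz
  have hsc0 : sc ≠ 0 := by
    intro h; apply hc; rw [← hsc, h]; ring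
  have hq' : 4 * sc ^ 2 * q ^ 4 = 4 * sc ^ 2 + l ^ 2 := by
    have h4 := hq
    rw [← hsc] at h4
    field_simp at h4
    linear_combination h4
  set A0 : Matrix (Fin 2) (Fin 2) ℂ := !![0, 1; 1, 0] with hA0
  set Q : Matrix (Fin 2) (Fin 2) ℂ := !![q ^ 3, l / (2 * sc) * q⁻¹; l / (2 * sc) * q, q] with hQdef
  set M : Matrix (Fin 2) (Fin 2) ℂ := !![0, l⁻¹; l⁻¹ + l / (4 * c), 0] with hMdef
  set k : ℂ := l⁻¹ * sc * (1 - q ^ 2) with hk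
  set ch : ℂ := Complex.cosh (k * Complex.log z) with hch
  set sh : ℂ := Complex.sinh (k * Complex.log z) with hsh
  set E : Matrix (Fin 2) (Fin 2) ℂ := !![ch, sh; sh, ch] with hEdef
  set Einv : Matrix (Fin 2) (Fin 2) ℂ := !![ch, -sh; -sh, ch] with hEinvdef
  have hchsh : ch ^ 2 - sh ^ 2 = 1 := Complex.cosh_sq_sub_sinh_sq _
  have hdet : Q.det = 1 := by
    rw [hQdef, Matrix.det_fin_two_of]
    field_simp
    linear_combination hq'
  have hdetU : IsUnit Q.det := by rw [hdet]; exact isUnit_one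
  have hQP : Q * P = 1 := by rw [hP]; exact Matrix.mul_nonsing_inv _ hdetU
  have hPQ : P * Q = 1 := by rw [hP]; exact Matrix.nonsing_inv_mul _ hdetU
  -- decomposition of the cosh/sinh matrix
  have hEw : ∀ t : ℂ,
      (!![Complex.cosh t, Complex.sinh t; Complex.sinh t, Complex.cosh t] :
        Matrix (Fin 2) (Fin 2) ℂ) = Complex.cosh t • 1 + Complex.sinh t • A0 := by
    intro t
    ext i j
    fin_cases i <;> fin_cases j <;>
      simp [hA0, Matrix.one_apply]
  -- entries of p w
  have hpw : ∀ (w : ℂ) (i j : Fin 2), p w i j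
      = Complex.cosh (k * Complex.log w) * P i j
        + Complex.sinh (k * Complex.log w) * (P * A0) i j := by
    intro w i j
    rw [hp w, hA, exp_smul_swap, hEw, mul_add, Matrix.mul_smul, Matrix.mul_smul, mul_one]
    simp
  -- derivative matrix
  have hlog : HasDerivAt (fun w => k * Complex.log w) (k * z⁻¹) z :=
    HasDerivAt.const_mul k (Complex.hasDerivAt_log hz)
  have hDch : HasDerivAt (fun w => Complex.cosh (k * Complex.log w))
      (Complex.sinh (k * Complex.log z) * (k * z⁻¹)) z := hlog.ccosh
  have hDsh : HasDerivAt (fun w => Complex.sinh (k * Complex.log w))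
      (Complex.cosh (k * Complex.log z) * (k * z⁻¹)) z := hlog.csinh
  have hder : (Matrix.of fun i j => deriv (fun w => p w i j) z)
      = (k * z⁻¹) • (sh • P + ch • (P * A0)) := by
    ext i j
    have hfun : (fun w => p w i j)
        = fun w => Complex.cosh (k * Complex.log w) * P i j
            + Complex.sinh (k * Complex.log w) * (P * A0) i j :=
      funext fun w => hpw w i j
    have hd : HasDerivAt (fun w => p w i j)
        (Complex.sinh (k * Complex.log z) * (k * z⁻¹) * P i j
          + Complex.cosh (k * Complex.log z) * (k * z⁻¹) * (P * A0) i j) z := by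
      rw [hfun]
      exact (hDch.mul_const _).add (hDsh.mul_const _)
    rw [Matrix.of_apply, hd.deriv]
    simp only [Matrix.smul_apply, Matrix.add_apply, smul_eq_mul, ← hch, ← hsh]
    ring
  -- algebraic matrix facts
  have hEEinv : E * Einv = 1 := by
    ext i j
    fin_cases i <;> fin_cases j <;>
      simp [hEdef, hEinvdef, Matrix.mul_apply, Fin.sum_univ_two, Matrix.one_apply] <;>
      first
        | ring1
        | linear_combination hchsh
        | linear_combination -hchsh
        | linear_combination 2 * hchsh
        | linear_combination -(2 * hchsh)
  have hEAE : Einv * A0 * E = A0 := by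
    ext i j
    fin_cases i <;> fin_cases j <;>
      simp [hEdef, hEinvdef, hA0, Matrix.mul_apply, Fin.sum_univ_two] <;>
      first
        | ring1
        | linear_combination hchsh
        | linear_combination -hchsh
        | linear_combination 2 * hchsh
        | linear_combination -(2 * hchsh)
  have hQM : Q * M = (l⁻¹ * q ^ 2) • (A0 * Q) := by
    ext i j
    fin_cases i <;> fin_cases j <;>
      simp [hQdef, hMdef, hA0, Matrix.mul_apply, Fin.sum_univ_two, Matrix.smul_apply] <;>
      (try rw [← hsc]) <;> field_simp [hl, hsc0, hq0] <;>
      first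
        | ring1
        | linear_combination hq'
        | linear_combination -hq'
        | linear_combination q * hq'
        | linear_combination -(q * hq')
        | linear_combination l * hq'
        | linear_combination q * l * hq'
        | linear_combination -(q * l) * hq'
        | linear_combination -(2 * l ^ 2 * sc) * hq'
        | linear_combination (2 * l ^ 2 * sc) * hq'
  have hQMP : Q * M * P = (l⁻¹ * q ^ 2) • A0 := by
    rw [hQM, Matrix.smul_mul, mul_assoc, hQP, mul_one]
  have hA0E : A0 * E = sh • (1 : Matrix (Fin 2) (Fin 2) ℂ) + ch • A0 := by
    ext i j
    fin_cases i <;> fin_cases j <;>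
      simp [hEdef, hA0, Matrix.mul_apply, Fin.sum_univ_two, Matrix.one_apply]
  have hPA0E : P * (A0 * E) = sh • P + ch • (P * A0) := by
    rw [hA0E, mul_add, Matrix.mul_smul, Matrix.mul_smul, mul_one]
  have hpz : p z = P * E := by
    rw [hp z, hA, exp_smul_swap, ← hch, ← hsh, ← hEdef]
  have hpinv : (p z)⁻¹ = Einv * Q := by
    apply Matrix.inv_eq_right_inv
    rw [hpz, mul_assoc, ← mul_assoc E Einv, hEEinv, one_mul, hPQ]
  -- assembly
  rw [hpinv, hpz, hder, hA]
  have key1 : Einv * Q * ((sc / z) • M) * (P * E) = ((sc / z) * (l⁻¹ * q ^ 2)) • A0 := by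
    rw [Matrix.mul_smul, Matrix.smul_mul]
    have h1 : Einv * Q * M * (P * E) = Einv * (Q * M * P) * E := by
      simp only [mul_assoc]
    rw [h1, hQMP, Matrix.mul_smul, Matrix.smul_mul, hEAE, smul_smul]
  have key2 : Einv * Q * ((k * z⁻¹) • (sh • P + ch • (P * A0))) = (k * z⁻¹) • A0 := by
    rw [← hPA0E, Matrix.mul_smul]
    congr 1
    have h2 : Einv * Q * (P * (A0 * E)) = Einv * (Q * P) * (A0 * E) := by
      simp only [mul_assoc]
    rw [h2, hQP, mul_one, ← mul_assoc, hEAE]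
  rw [key1, key2, ← add_smul]
  have hs : (sc / z) * (l⁻¹ * q ^ 2) + k * z⁻¹ = sc * l⁻¹ / z := by
    rw [hk]; field_simp; ring
  rw [hs]
end
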